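/- arXiv:1304.5152 — 2 statements merged into one kernel-verified Lean document; each statement's English description precedes it below -/
import Mathlib

section
/- With I, J, H, H^P, E^W and the consistency relation T as defined: for all P, R ∈ I with P ≠ R, every k ∈ ℕ, and every W ∈ J with R ∈ W, there EXIST a, b ∈ H^P such that T(a, b, (k,R,W)) holds. (Consequently, in the complex algebra of the atom structure, H^P ; H^P ⊇ H^R for all R ≠ P, so the map P ↦ H^P embeds the finite relation algebra M into the complex algebra.) -/
/-- `e(i,j,k)`: the natural numbers `i`, `j`, `k` are *evenly distributed*: some
arrangement of `i, j, k` forms a three-term arithmetic progression. -/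
def EvenlyDistributed (i j k : ℕ) : Prop :=
  ∃ p q r : ℕ, ({p, q, r} : Set ℕ) = ({i, j, k} : Set ℕ) ∧ (r : ℤ) - q = (q : ℤ) - p

variable (α : Type*) [DecidableEq α]

/-- The atom structure `H = {(i,P,W) : i ∈ ℕ, P ∈ I, W ∈ J, P ∈ W}`, where `J` is the set
of 2-element subsets of `I = α`, obtained by blowing up each atom `P` of the finite
relation algebra `M` into infinitely many atoms. -/
def blurH : Set (ℕ × α × Finset α) :=
  {x | x.2.2.card = 2 ∧ x.2.1 ∈ x.2.2}

variable {α}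

/-- `H^P`: the atoms of `H` obtained by splitting the atom `P`. -/
def blurHP (P : α) : Set (ℕ × α × Finset α) :=
  {x ∈ blurH α | x.2.1 = P}

/-- `E^W`: the block of atoms of `H` carrying the blur `W`. -/
def blurEW (W : Finset α) : Set (ℕ × α × Finset α) :=
  {x ∈ blurH α | x.2.2 = W}

/-- The ternary consistency relation: `T((i,P,S),(j,Q,Z),(k,R,W))` holds iff
`S ∩ Z ∩ W = ∅`, or (`e(i,j,k)` and not `P = Q = R`). -/
def blurT (a b c : ℕ × α × Finset α) : Prop :=
  a.2.2 ∩ b.2.2 ∩ c.2.2 = ∅ ∨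
    (EvenlyDistributed a.1 b.1 c.1 ∧ ¬ (a.2.1 = b.2.1 ∧ b.2.1 = c.2.1))

theorem EvenlyDistributed.refl (i : ℕ) : EvenlyDistributed i i i :=
  ⟨i, i, i, rfl, rfl⟩

theorem pair_mem_blurHP {P R : α} (hPR : P ≠ R) (i : ℕ) : (i, P, {P, R}) ∈ blurHP P :=
  ⟨⟨Finset.card_pair hPR, Finset.mem_insert_self P {R}⟩, rfl⟩

theorem blurT_of_ne {P R : α} (hPR : P ≠ R) (i : ℕ) (S Z W : Finset α) :
    blurT (i, P, S) (i, P, Z) (i, R, W) :=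
  Or.inr ⟨EvenlyDistributed.refl i, fun h => hPR h.2⟩

theorem blurHP_comp_covers_general {α : Type*} [DecidableEq α]
    (P R : α) (hPR : P ≠ R) (k : ℕ) (W : Finset α) :
    ∃ a ∈ blurHP P, ∃ b ∈ blurHP P, blurT a b (k, R, W) :=
  ⟨_, pair_mem_blurHP hPR k, _, pair_mem_blurHP hPR k, blurT_of_ne hPR k _ _ W⟩

/-- For distinct atoms `P ≠ R` of `I`, every atom `(k,R,W)` of `H^R` is a consistent
composition of two atoms of `H^P`: hence in the complex algebra `H^P ; H^P ⊇ H^R`, so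
`P ↦ H^P` embeds the finite relation algebra `M` into the complex algebra. -/
theorem blurHP_comp_covers {α : Type*} [Fintype α] [DecidableEq α]
    (hcard : 6 ≤ Fintype.card α) (P R : α) (hPR : P ≠ R) (k : ℕ) (W : Finset α)
    (hW : W.card = 2) (hRW : R ∈ W) :
    ∃ a ∈ blurHP P, ∃ b ∈ blurHP P, blurT a b (k, R, W) :=
  blurHP_comp_covers_general P R hPR k W
end

section
/- Let U be a non-principal ultrafilter on ℕ and let (G_i)_{i ∈ ℕ} be a family of simple graphs on vertex types V_i such that for every i, every cycle in G_i has length greater than i (the girth of G_i exceeds i). Define the ultraproduct graph G on the U-germs of Π i, V_i (functions identified when they agree on a set belonging to U), with germs [x], [y] adjacent if and only if {i : x i is adjacent to y i in G_i} ∈ U. Then G is a well-defined simple graph, G is acyclic, and hence G is 2-colourable. -/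
/-! A cycle of the ultraproduct has finitely many vertices and edges, so for `U`-almost every `i`
the `i`-th coordinates of their representatives are pairwise distinct and adjacent along the
cycle: the cycle is copied into `G i`. Since the girths tend to infinity along the non-principal
`U`, some such `G i` has girth larger than the cycle's length, which is absurd. -/

/-- The ultraproduct of a family of simple graphs `G i` on vertex types `V i` modulo an
ultrafilter `U`: its vertices are the `U`-germs of functions in `Π i, V i` (functions
identified when they agree on a set in `U`), and two germs are adjacent iff (for some —
equivalently, any — representatives) the coordinates are adjacent `U`-almost everywhere. -/
def ultraproductGraph (U : Ultrafilter ℕ) (V : ℕ → Type*) (G : ∀ i, SimpleGraph (V i)) :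
    SimpleGraph ((U : Filter ℕ).Product V) :=
  SimpleGraph.fromRel fun X Y =>
    ∃ x y : ∀ i, V i,
      Quotient.mk (Filter.productSetoid (U : Filter ℕ) V) x = X ∧
      Quotient.mk (Filter.productSetoid (U : Filter ℕ) V) y = Y ∧
      {i : ℕ | (G i).Adj (x i) (y i)} ∈ U

open Filter SimpleGraph

lemma SimpleGraph.Walk.IsCycle.egirth_induce_support_le {W : Type*} {H : SimpleGraph W} {a : W}
    {p : H.Walk a a} (hp : p.IsCycle) : (H.induce {v | v ∈ p.support}).egirth ≤ p.length := by
  set e := Embedding.induce (G := H) {v | v ∈ p.support}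
  set q := p.induce {v | v ∈ p.support} fun _ hv => hv
  have hmap : q.map e.toHom = p := p.map_induce _
  have hq : q.IsCycle := by
    rwa [← Walk.isCycle_map_iff_of_injective (f := e.toHom) e.injective, hmap]
  have hlen : q.length = p.length := by
    rw [← q.length_map e.toHom, hmap]
    rfl
  exact hlen ▸ egirth_le_length hq

lemma Ultrafilter.le_cofinite_of_forall_ne_pure {α : Type*} {U : Ultrafilter α}
    (hU : ∀ a, (U : Filter α) ≠ pure a) : (U : Filter α) ≤ cofinite :=
  U.le_cofinite_or_eq_pure.resolve_right fun ⟨a, ha⟩ => hU a (by rw [ha, Ultrafilter.coe_pure])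

section ultraproductGraph

variable {U : Ultrafilter ℕ} {V : ℕ → Type*} {G : ∀ i, SimpleGraph (V i)}

local notation "germ" => Quotient.mk (Filter.productSetoid (U : Filter ℕ) V)

lemma ultraproductGraph_adj_mk_iff (x y : ∀ i, V i) :
    (ultraproductGraph U V G).Adj (germ x) (germ y) ↔ ∀ᶠ i in U, (G i).Adj (x i) (y i) := by
  constructor
  · rintro ⟨-, ⟨x', y', hx, hy, hadj⟩ | ⟨y', x', hy, hx, hadj⟩⟩
    · filter_upwards [hadj, Quotient.exact hx, Quotient.exact hy] with i hi hxi hyi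
      rwa [← hxi, ← hyi]
    · filter_upwards [hadj, Quotient.exact hx, Quotient.exact hy] with i hi hxi hyi
      rw [← hxi, ← hyi]
      exact hi.symm
  · intro h
    refine ⟨fun hxy => ?_, Or.inl ⟨x, y, rfl, rfl, h⟩⟩
    obtain ⟨i, hadj, heq⟩ := (h.and (Quotient.exact hxy)).exists
    exact (G i).ne_of_adj hadj heq

lemma ultraproductGraph_eventually_adj_out {X Y : (U : Filter ℕ).Product V}
    (h : (ultraproductGraph U V G).Adj X Y) : ∀ᶠ i in U, (G i).Adj (X.out i) (Y.out i) := by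
  rw [← Quotient.out_eq X, ← Quotient.out_eq Y] at h
  exact (ultraproductGraph_adj_mk_iff _ _).mp h

lemma Filter.Product.eventually_out_ne {X Y : (U : Filter ℕ).Product V} (h : X ≠ Y) :
    ∀ᶠ i in U, X.out i ≠ Y.out i := by
  refine Ultrafilter.eventually_not.mpr fun heq => h ?_
  rw [← Quotient.out_eq X, ← Quotient.out_eq Y]
  exact Quotient.sound heq

lemma ultraproductGraph_eventually_induce_isContained {S : Set ((U : Filter ℕ).Product V)}
    (hS : S.Finite) : ∀ᶠ i in U, (ultraproductGraph U V G).induce S ⊑ G i := by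
  have := hS.to_subtype
  have hadj : ∀ᶠ i in U, ∀ X Y : S,
      (ultraproductGraph U V G).Adj X Y → (G i).Adj (X.1.out i) (Y.1.out i) := by
    simp only [eventually_all]
    exact fun X Y => ultraproductGraph_eventually_adj_out
  have hinj : ∀ᶠ i in U, ∀ X Y : S, X.1.out i = Y.1.out i → X = Y := by
    simp only [eventually_all]
    intro X Y
    by_cases hXY : X = Y
    · exact Eventually.of_forall fun _ _ => hXY
    · filter_upwards [Filter.Product.eventually_out_ne (Subtype.coe_ne_coe.mpr hXY)] with i hi
      exact fun heq => (hi heq).elim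
  filter_upwards [hadj, hinj] with i hadj hinj
  exact ⟨⟨⟨fun X => X.1.out i, hadj _ _⟩, fun X Y => hinj X Y⟩⟩

theorem ultraproductGraph_isAcyclic_of_eventually_lt_egirth
    (hgirth : ∀ n : ℕ, ∀ᶠ i in U, (n : ℕ∞) < (G i).egirth) :
    (ultraproductGraph U V G).IsAcyclic := by
  intro X p hp
  obtain ⟨i, hcopy, hlt⟩ := ((ultraproductGraph_eventually_induce_isContained
    p.support.finite_toSet).and (hgirth p.length)).exists
  exact (hlt.trans_le (hcopy.egirth_le.trans hp.egirth_induce_support_le)).false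

end ultraproductGraph

/-- If `U` is a non-principal ultrafilter on `ℕ` and each `G i` has girth exceeding `i`
(every cycle in `G i` has length `> i`), then the ultraproduct graph is well defined
(adjacency of germs `[x]`, `[y]` holds iff `{i : x i ~ y i in G i} ∈ U`, independently of
representatives), is acyclic, and hence is 2-colourable. -/
theorem ultraproductGraph_acyclic_colorable_two (U : Ultrafilter ℕ)
    (hU : ∀ i : ℕ, (U : Filter ℕ) ≠ pure i)
    (V : ℕ → Type*) (G : ∀ i, SimpleGraph (V i))
    (hgirth : ∀ i : ℕ, (i : ℕ∞) < (G i).egirth) :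
    (∀ x y : ∀ i, V i,
        (ultraproductGraph U V G).Adj
            (Quotient.mk (Filter.productSetoid (U : Filter ℕ) V) x)
            (Quotient.mk (Filter.productSetoid (U : Filter ℕ) V) y) ↔
          {i : ℕ | (G i).Adj (x i) (y i)} ∈ U) ∧
      (ultraproductGraph U V G).IsAcyclic ∧
      (ultraproductGraph U V G).Colorable 2 := by
  have hatTop : (U : Filter ℕ) ≤ atTop :=
    Nat.cofinite_eq_atTop ▸ Ultrafilter.le_cofinite_of_forall_ne_pure hU
  have hacyclic : (ultraproductGraph U V G).IsAcyclic :=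
    ultraproductGraph_isAcyclic_of_eventually_lt_egirth fun n =>
      ((eventually_ge_atTop n).filter_mono hatTop).mono fun i hi =>
        (Nat.cast_le.mpr hi).trans_lt (hgirth i)
  exact ⟨ultraproductGraph_adj_mk_iff, hacyclic, hacyclic.colorable_two⟩
end
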